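/- Let t be a semifinite template with zigzag flange fl(t) = (a₀, …, a_k) and sections t₁, …, t_k. The map f : Z(t) ∖ J(t) → Z(t₁) × ⋯ × Z(t_k), λ ↦ (λ^{(1)}, …, λ^{(k)}), given by the unique decomposition bw(λ) = a₀ ⊔ bw(λ^{(1)}) ⊔ a₁ ⊔ ⋯ ⊔ bw(λ^{(k)}) ⊔ a_k, is an embedding of graded graphs: it is injective, and for λ, μ ∈ Z(t) ∖ J(t) one has λ ↗ μ if and only if f(λ) ↗ f(μ) in the direct product graph. Moreover, the image of f is an ideal of Z(t₁) × ⋯ × Z(t_k). -/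

import Mathlib

/-!
Common definitions: the zigzag graph on binary words, templates and their coideals,
zigzag flanges and sections, the functions `F_λ(u)` and `φ_{t,w}`, and harmonic /
semifinite / indecomposable functions on subgraphs of the zigzag graph.
-/

open scoped ENNReal NNReal

namespace Zigzag

/-- Binary words: `true` is `+`, `false` is `−`. -/
abbrev BW := List Bool

/-- `CoveredBy a b`: `b` covers `a` in the subword order, i.e. `|b| = |a| + 1` and `a`
is a subword of `b`; these are the edges of the zigzag graph. -/
def CoveredBy (a b : BW) : Prop := a.Sublist b ∧ b.length = a.length + 1

/-- The set of upper neighbours of `a` lying in `S` is finite. -/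
lemma upSet_finite (S : Set BW) (a : BW) : {b | b ∈ S ∧ CoveredBy a b}.Finite :=
  (List.finite_length_eq Bool (a.length + 1)).subset (fun _ hb => hb.2.2)

/-- The finset of upper neighbours of `a` inside `S`. -/
noncomputable def upFinset (S : Set BW) (a : BW) : Finset BW :=
  (upSet_finite S a).toFinset

/-- A `[0,∞]`-valued function is harmonic on `S ⊆ Z` (with the edges induced from the
zigzag graph) if its value at any vertex of `S` equals the sum of its values at the
upper neighbours lying in `S`. -/
def HarmonicOn (S : Set BW) (φ : BW → ℝ≥0∞) : Prop :=
  ∀ a ∈ S, φ a = ∑ b ∈ upFinset S a, φ b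

/-- A template: a nonempty sequence of clusters with alternating signs, each cluster
being a sign (`true` = `+`, `false` = `−`) with a multiplicity in `{1,2,…} ∪ {∞}`,
containing at least one infinite cluster. -/
structure Template where
  clusters : List (Bool × ℕ∞)
  ne : clusters ≠ []
  pos : ∀ c ∈ clusters, c.2 ≠ 0
  alternating : clusters.Chain' fun c d => c.1 ≠ d.1
  hasInf : ∃ c ∈ clusters, c.2 = ⊤

/-- The binary word obtained from a list of clusters by replacing every infinite
multiplicity by `N` (and keeping the finite multiplicities). -/
def clWord (cs : List (Bool × ℕ∞)) (N : ℕ) : BW :=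
  (cs.map fun c => List.replicate (if c.2 = ⊤ then N else c.2.toNat) c.1).flatten

/-- The coideal generated by a list of clusters: all binary words that are subwords of
some instantiation. -/
def Zcl (cs : List (Bool × ℕ∞)) : Set BW := {a | ∃ N, a.Sublist (clWord cs N)}

/-- The coideal `Z(t)` of the zigzag graph attached to a template `t`. -/
def Zt (t : Template) : Set BW := Zcl t.clusters

/-- The cluster in position `i` of `t` is a separating cluster: a one-symbol finite
cluster which is not outermost and whose two neighbours are infinite clusters
(necessarily of the same sign). -/
def Template.isSep (t : Template) (i : ℕ) : Prop :=
  0 < i ∧ i + 1 < t.clusters.length ∧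
  (t.clusters.getD i (true, 1)).2 = 1 ∧
  (t.clusters.getD (i - 1) (true, 1)).2 = ⊤ ∧
  (t.clusters.getD (i + 1) (true, 1)).2 = ⊤

/-- A template is finite if all its finite clusters are separating; otherwise it is
semifinite. -/
def Template.IsFiniteTemplate (t : Template) : Prop :=
  ∀ i < t.clusters.length, (t.clusters.getD i (true, 1)).2 ≠ ⊤ → t.isSep i

/-- The number of infinite clusters of a template. -/
def Template.numInf (t : Template) : ℕ :=
  (t.clusters.filter fun c => decide (c.2 = ⊤)).length

/-- Position `p` of `t` carries a finite non-separating cluster, i.e. a cluster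
contributing to the zigzag flange of `t`. -/
def IsFlangePos (t : Template) (p : ℕ) : Prop :=
  p < t.clusters.length ∧ (t.clusters.getD p (true, 1)).2 ≠ ⊤ ∧ ¬t.isSep p

/-- Decrease by one the multiplicity of the cluster in position `p`. -/
def decAt (cs : List (Bool × ℕ∞)) (p : ℕ) : List (Bool × ℕ∞) :=
  cs.set p ((cs.getD p (true, 1)).1, (cs.getD p (true, 1)).2 - 1)

/-- The coideal `J(t)`: the union of the coideals `Z(r)` over all `r` obtained from `t`
by removing a single symbol from a cluster corresponding to a block of a binary word
from the zigzag flange of `t` (no merging of clusters is needed to generate `Z(r)`). -/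
def Jt (t : Template) : Set BW :=
  {a | ∃ p, IsFlangePos t p ∧ a ∈ Zcl (decAt t.clusters p)}

/-- The canonical splitting of a template `t` into its zigzag flange
`fl(t) = (a₀, …, a_k)` (given by the lists `A 0, …, A k` of clusters, each consisting
of finite non-separating clusters of `t`) and its sections `t₁, …, t_k` (the maximal
groups of consecutive clusters forming finite templates), so that
`t = (a₀, t₁, a₁, …, a_{k−1}, t_k, a_k)`.  The two `interior` conditions express the
maximality of the decomposition. -/
structure SectionData (t : Template) where
  k : ℕ
  A : Fin (k + 1) → List (Bool × ℕ∞)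
  T : Fin k → Template
  concat : t.clusters
      = A 0 ++ (List.ofFn fun i : Fin k => (T i).clusters ++ A i.succ).flatten
  finA : ∀ j, ∀ c ∈ A j, c.2 ≠ ⊤
  secFin : ∀ i, (T i).IsFiniteTemplate
  interior_ne : ∀ j : Fin (k + 1), (j : ℕ) ≠ 0 → (j : ℕ) ≠ k → A j ≠ []
  interior_not_sep : ∀ j : Fin (k + 1), (j : ℕ) ≠ 0 → (j : ℕ) ≠ k →
      ∀ s : Bool, A j ≠ [(s, 1)]

/-- The binary word corresponding to a list of finite clusters (a flange word). -/
def flangeWord (cs : List (Bool × ℕ∞)) : BW :=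
  (cs.map fun c => List.replicate c.2.toNat c.1).flatten

/-- `a₀ ⊔ ℓ 1 ⊔ a₁ ⊔ … ⊔ ℓ k ⊔ a_k` (empty flange words disappear). -/
def assemble {t : Template} (D : SectionData t) (ℓ : Fin D.k → BW) : BW :=
  flangeWord (D.A 0) ++ (List.ofFn fun i : Fin D.k => ℓ i ++ flangeWord (D.A i.succ)).flatten

/-- `ℓ` is a decomposition of `a` along the sections of `t`:
`bw(a) = a₀ ⊔ bw(ℓ 1) ⊔ a₁ ⊔ … ⊔ bw(ℓ k) ⊔ a_k` with `ℓ i ∈ Z(tᵢ)`. -/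
def decompOf {t : Template} (D : SectionData t) (a : BW) (ℓ : Fin D.k → BW) : Prop :=
  (∀ i, ℓ i ∈ Zt (D.T i)) ∧ a = assemble D ℓ

/-- The signs of the infinite clusters of a list of clusters, in order. -/
def infSigns (cs : List (Bool × ℕ∞)) : List Bool :=
  (cs.filter fun c => decide (c.2 = ⊤)).map Prod.fst

/-- The number of weights consumed by the sections preceding the `i`-th one. -/
def secOffset {t : Template} (D : SectionData t) (i : Fin D.k) : ℕ :=
  ∑ i' ∈ Finset.univ.filter (· < i), (infSigns (D.T i').clusters).length

/-- The part `vᵢ` of the tuple of weights `w` corresponding to the infinite clusters of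
the `i`-th section, as a sequence of (sign, weight) pairs. -/
def vD {t : Template} (D : SectionData t) (w : List ℝ) (i : Fin D.k) : List (Bool × ℝ) :=
  (infSigns (D.T i).clusters).zip (w.drop (secOffset D i))

/-- `F_λ(u)` for a finite sequence `u` of (sign, length) pairs and a zigzag `λ`
(encoded by its binary word `a`, so that `λ` has `a.length + 1` boxes): the sum, over
all decompositions of `λ` into `u.length` consecutive (possibly empty) zigzags
`λ(1), …, λ(m)` with `λ(i)` a row when the `i`-th sign is `+` and a column when it is
`−`, of `u₁ ^ |λ(1)| ⋯ u_m ^ |λ(m)|`.  A decomposition is recorded by the tuple `c` of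
the numbers of boxes of the pieces; the row/column constraint says that the letters of
`a` strictly inside the `i`-th group of boxes all equal the `i`-th sign. -/
noncomputable def Fword (u : List (Bool × ℝ)) (a : BW) : ℝ :=
  ∑ c ∈ (Finset.Nat.antidiagonalTuple u.length (a.length + 1)).filter
      (fun c => ∀ i : Fin u.length,
        (a.drop (∑ i' ∈ Finset.univ.filter (· < i), c i')).take (c i - 1)
          = List.replicate (c i - 1) (u.get i).1),
    ∏ i, (u.get i).2 ^ c i

open Classical in
/-- The function `φ_{t,w}` attached to a semifinite zigzag growth model `(t, w)`:
it equals `+∞` on `J(t)`, and on `Z(t) ∖ J(t)` it equals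
`F_{λ^{(1)}}(v₁) ⋯ F_{λ^{(k)}}(v_k)`, where `(λ^{(1)}, …, λ^{(k)})` is the (unique)
decomposition of `λ` along the sections of `t` (it is `0` off `Z(t)`). -/
noncomputable def phiTW (t : Template) (D : SectionData t) (w : List ℝ) (a : BW) : ℝ≥0∞ :=
  if a ∉ Zt t then 0
  else if a ∈ Jt t then ⊤
  else if h : ∃ ℓ : Fin D.k → BW, decompOf D a ℓ then
    ENNReal.ofReal (∏ i, Fword (vD D w i) (h.choose i))
  else 0

section Kcone

/-- The relation `λ = ∑_{μ : λ ↗ μ} μ` (within `S`) as an element of the free module. -/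
noncomputable def relOf (S : Set BW) (a : BW) : BW →₀ ℝ :=
  Finsupp.single a 1 - ∑ b ∈ upFinset S a, Finsupp.single b 1

/-- The submodule of relations defining `K(S)`. -/
noncomputable def Krel (S : Set BW) : Submodule ℝ (BW →₀ ℝ) :=
  Submodule.span ℝ {f | ∃ a ∈ S, f = relOf S a}

/-- The class of `f` in `K(S) = (⊕_{λ ∈ S} ℝ λ) ⧸ (relations)`. -/
noncomputable def kmk (S : Set BW) (f : BW →₀ ℝ) : (BW →₀ ℝ) ⧸ Krel S :=
  Submodule.Quotient.mk f

/-- Nonnegative formal combinations of vertices of `S`. -/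
def NonnegOn (S : Set BW) (f : BW →₀ ℝ) : Prop :=
  (∀ x, 0 ≤ f x) ∧ ∀ x ∈ f.support, x ∈ S

/-- The cone `K⁺(S)` spanned by the vertices of `S` in `K(S)`. -/
noncomputable def Kpos (S : Set BW) : Set ((BW →₀ ℝ) ⧸ Krel S) :=
  kmk S '' {f | NonnegOn S f}

/-- The order defined by the cone `K⁺(S)`: `x ≤_K y` iff `y − x ∈ K⁺(S)`. -/
def leK (S : Set BW) (x y : (BW →₀ ℝ) ⧸ Krel S) : Prop := y - x ∈ Kpos S

/-- The value of (the canonical extension of) `φ` at a nonnegative combination of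
vertices. -/
noncomputable def phiHat (φ : BW → ℝ≥0∞) (f : BW →₀ ℝ) : ℝ≥0∞ :=
  ∑ x ∈ f.support, ENNReal.ofReal (f x) * φ x

/-- `φ` is finite on `S`. -/
def FiniteOn (S : Set BW) (φ : BW → ℝ≥0∞) : Prop := ∀ a ∈ S, φ a ≠ ⊤

/-- `φ` is a semifinite function on (the graph) `S`: it is not everywhere finite, and
its value at any element `a` of the cone `K⁺` is the supremum of its values at the
elements `b ≤_K a` of the cone where it is finite. -/
def SemifiniteOn (S : Set BW) (φ : BW → ℝ≥0∞) : Prop :=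
  (∃ a ∈ S, φ a = ⊤) ∧
  ∀ f : BW →₀ ℝ, NonnegOn S f →
    phiHat φ f =
      ⨆ g ∈ {g : BW →₀ ℝ |
        NonnegOn S g ∧ leK S (kmk S g) (kmk S f) ∧ phiHat φ g ≠ ⊤}, phiHat φ g

/-- A semifinite harmonic function `φ` on `S` is indecomposable if any finite or
semifinite harmonic function `φ′ ≤ φ` on `S` which does not vanish identically on the
finiteness ideal of `φ` is a constant multiple of `φ` on that ideal. -/
def IndecSemifiniteOn (S : Set BW) (φ : BW → ℝ≥0∞) : Prop :=
  ∀ φ' : BW → ℝ≥0∞, HarmonicOn S φ' →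
    (FiniteOn S φ' ∨ SemifiniteOn S φ') →
    (∀ a ∈ S, φ' a ≤ φ a) →
    (∃ a ∈ S, φ a ≠ ⊤ ∧ φ' a ≠ 0) →
    ∃ c : ℝ≥0, ∀ a ∈ S, φ a ≠ ⊤ → φ' a = (c : ℝ≥0∞) * φ a

end Kcone

end Zigzag

namespace Zigzag

/-- Vertices of the direct product graph `Z(t₁) × ⋯ × Z(t_k)`. -/
def prodV {t : Template} (D : SectionData t) : Set (Fin D.k → BW) :=
  {x | ∀ i, x i ∈ Zt (D.T i)}

/-- Edges of the direct product graph: exactly one coordinate is covered, the other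
coordinates are unchanged. -/
def prodAdj {t : Template} (D : SectionData t) (x y : Fin D.k → BW) : Prop :=
  x ∈ prodV D ∧ y ∈ prodV D ∧
    ∃ i, CoveredBy (x i) (y i) ∧ ∀ j, j ≠ i → x j = y j

/-!
Write `t = (a₀, t₁, a₁, …, t_k, a_k)` and let `a ≤ b` be words of `Z(t)` decomposed along the
sections, with `a ∉ J(t)`. Splitting an embedding of `a` into `b` along the decomposition of `b`
writes `a` as an interleaving of subwords of the flange words and subwords of the components of
`b`. If one flange word is not used completely, `a` is a subword of an instantiation of `t` with
one flange symbol removed, so `a ∈ J(t)`. Otherwise the two decompositions of `a` (its own and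
the one just found) must coincide: where they first differ, the shorter section component can
absorb the first letter of the next flange word, which is nonempty because it is interior, and
again `a ∈ J(t)`. Hence `a ≤ b` forces `λ⁽ⁱ⁾(a) ≤ λ⁽ⁱ⁾(b)` for every `i`. Injectivity follows by
antisymmetry, the edge correspondence by counting lengths, and the ideal property because
`J(t)` is closed under taking subwords.
-/

open List

section Lists

variable {α β γ : Type*}

theorem forall₂_trans {R : α → β → Prop} {S : β → γ → Prop} {T : α → γ → Prop} :
    ∀ {l₁ l₂ l₃}, Forall₂ R l₁ l₂ → Forall₂ S l₂ l₃ → (∀ a b c, R a b → S b c → T a c) →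
      Forall₂ T l₁ l₃
  | _, _, _, .nil, .nil, _ => .nil
  | _, _, _, .cons h₁ h₂, .cons h₃ h₄, h => .cons (h _ _ _ h₁ h₃) (forall₂_trans h₂ h₄ h)

theorem forall₂_ofFn_iff {R : α → β → Prop} {k : ℕ} {f : Fin k → α} {g : Fin k → β} :
    Forall₂ R (ofFn f) (ofFn g) ↔ ∀ i, R (f i) (g i) := by
  simp [forall₂_iff_get, Fin.forall_iff]

theorem getD_append_append_length_add (U A V : List β) {i : ℕ} (hi : i < A.length)
    (d : β) : (U ++ A ++ V).getD (U.length + i) d = A[i] := by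
  rw [getD_eq_getElem?_getD, append_assoc, getElem?_append_right (by omega)]
  simp [getElem?_append_left hi, getElem?_eq_getElem hi]

def interleave : List (List α) → List (List α) → List α
  | [], _ => []
  | x :: _, [] => x
  | x :: xs, y :: ys => x ++ y ++ interleave xs ys

theorem interleave_ofFn {k : ℕ} (x : Fin (k + 1) → List α) (y : Fin k → List α) :
    interleave (ofFn x) (ofFn y) = x 0 ++ (ofFn fun i => y i ++ x i.succ).flatten := by
  induction k with
  | zero => simp [interleave]
  | succ k ih =>
    rw [ofFn_succ (f := x), ofFn_succ (f := y), interleave, ih,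
      ofFn_succ (f := fun i => y i ++ x i.succ)]
    simp [append_assoc]

theorem interleave_cons_append (u v : List α) (xs ys : List (List α)) :
    interleave ((u ++ v) :: xs) ys = u ++ interleave (v :: xs) ys := by
  cases ys <;> simp [interleave, append_assoc]

theorem interleave_sublist_interleave {xs xs' ys ys' : List (List α)}
    (hx : Forall₂ (· <+ ·) xs xs') (hy : Forall₂ (· <+ ·) ys ys') :
    interleave xs ys <+ interleave xs' ys' := by
  induction hx generalizing ys ys' with
  | nil => simp [interleave]
  | cons hx _ ih =>
    cases hy with
    | nil => exact hx
    | cons hy hys => exact (hx.append hy).append (ih hys)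

theorem exists_of_sublist_interleave {a : List α} {xs ys : List (List α)}
    (hlen : xs.length = ys.length + 1) (h : a <+ interleave xs ys) :
    ∃ xs' ys', Forall₂ (· <+ ·) xs' xs ∧ Forall₂ (· <+ ·) ys' ys ∧ a = interleave xs' ys' := by
  induction ys generalizing a xs with
  | nil =>
    obtain ⟨x, rfl⟩ : ∃ x, xs = [x] := length_eq_one_iff.mp hlen
    exact ⟨[a], [], .cons h .nil, .nil, rfl⟩
  | cons y ys ih =>
    obtain ⟨x, xs, rfl⟩ := exists_cons_of_length_eq_add_one hlen
    have h : a <+ x ++ (y ++ interleave xs ys) := by simpa [interleave, append_assoc] using h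
    obtain ⟨a₁, a', rfl, h₁, h'⟩ := sublist_append_iff.mp h
    obtain ⟨a₂, a₃, rfl, h₂, h₃⟩ := sublist_append_iff.mp h'
    obtain ⟨xs', ys', hxs, hys, rfl⟩ := ih (by simpa using hlen) h₃
    exact ⟨a₁ :: xs', a₂ :: ys', .cons h₁ hxs, .cons h₂ hys, by simp [interleave]⟩

theorem exists_interleave_modify_eq {xs ys : List (List α)} (hlen : xs.length = ys.length + 1)
    {j : ℕ} (hj : j < xs.length) :
    ∃ u v, (j = 0 → u = []) ∧ (j = ys.length → v = []) ∧
      ∀ f, interleave (xs.modify j f) ys = u ++ f xs[j] ++ v := by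
  induction xs generalizing ys j with
  | nil => simp at hj
  | cons x xs ih =>
    rcases ys with _ | ⟨y, ys⟩
    · obtain rfl : xs = [] := by simpa using hlen
      obtain rfl : j = 0 := by simpa using hj
      exact ⟨[], [], by simp, by simp, by simp [interleave]⟩
    rcases j with _ | j
    · exact ⟨[], y ++ interleave xs ys, by simp, by simp, by simp [interleave, append_assoc]⟩
    obtain ⟨u, v, -, hv, huv⟩ := ih (by simpa using hlen) (by simpa using hj)
    exact ⟨x ++ y ++ u, v, by simp, by simpa using hv,
      by simp [interleave, huv, append_assoc]⟩

end Lists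

section ClusterWords

@[simp]
theorem clWord_nil (N : ℕ) : clWord [] N = [] := rfl

@[simp]
theorem clWord_append (u v : List (Bool × ℕ∞)) (N : ℕ) :
    clWord (u ++ v) N = clWord u N ++ clWord v N := by
  simp [clWord]

theorem clWord_interleave (As Ts : List (List (Bool × ℕ∞))) (N : ℕ) :
    clWord (interleave As Ts) N = interleave (As.map (clWord · N)) (Ts.map (clWord · N)) := by
  induction As generalizing Ts with
  | nil => simp [interleave]
  | cons A As ih => cases Ts <;> simp [interleave, ih]

theorem clWord_sublist_of_le (cs : List (Bool × ℕ∞)) {N M : ℕ} (h : N ≤ M) :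
    clWord cs N <+ clWord cs M := by
  induction cs with
  | nil => simp
  | cons c cs ih =>
    rw [← singleton_append, clWord_append, clWord_append (v := cs)]
    refine Sublist.append ?_ ih
    simp only [clWord, map_cons, map_nil, flatten_cons, flatten_nil, append_nil,
      replicate_sublist_replicate]
    split <;> omega

@[simp]
theorem flangeWord_cons (c : Bool × ℕ∞) (A : List (Bool × ℕ∞)) :
    flangeWord (c :: A) = replicate c.2.toNat c.1 ++ flangeWord A := by
  simp [flangeWord]

theorem flangeWord_sublist_clWord (A : List (Bool × ℕ∞)) (N : ℕ) :
    flangeWord A <+ clWord A N := by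
  induction A with
  | nil => simp [flangeWord]
  | cons c A ih =>
    rw [flangeWord_cons, ← singleton_append, clWord_append]
    refine Sublist.append ?_ ih
    simp only [clWord, map_cons, map_nil, flatten_cons, flatten_nil, append_nil,
      replicate_sublist_replicate]
    split <;> simp_all

theorem mem_Zcl_of_sublist {a b : BW} {cs : List (Bool × ℕ∞)} (hab : a <+ b) (hb : b ∈ Zcl cs) :
    a ∈ Zcl cs :=
  hb.imp fun _ hN => hab.trans hN

theorem mem_Jt_of_sublist {a b : BW} {t : Template} (hab : a <+ b) (hb : b ∈ Jt t) :
    a ∈ Jt t :=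
  hb.imp fun _ hp => ⟨hp.1, mem_Zcl_of_sublist hab hp.2⟩

theorem exists_forall₂_sublist_clWord {ys : List BW} {Ts : List (List (Bool × ℕ∞))}
    (h : Forall₂ (· ∈ Zcl ·) ys Ts) : ∃ N, Forall₂ (fun y T => y <+ clWord T N) ys Ts := by
  induction h with
  | nil => exact ⟨0, .nil⟩
  | @cons y T _ _ hy _ ih =>
    obtain ⟨N₁, hN₁⟩ := hy
    obtain ⟨N₂, hN₂⟩ := ih
    exact ⟨max N₁ N₂, .cons (hN₁.trans (clWord_sublist_of_le T (le_max_left _ _)))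
      (hN₂.imp fun y T h => h.trans (clWord_sublist_of_le T (le_max_right _ _)))⟩

theorem interleave_mem_Zcl {xs ys : List BW} {As Ts : List (List (Bool × ℕ∞))}
    (hxs : Forall₂ (fun x A => x <+ flangeWord A) xs As) (hys : Forall₂ (· ∈ Zcl ·) ys Ts) :
    interleave xs ys ∈ Zcl (interleave As Ts) := by
  obtain ⟨N, hN⟩ := exists_forall₂_sublist_clWord hys
  refine ⟨N, ?_⟩
  rw [clWord_interleave]
  exact interleave_sublist_interleave
    (forall₂_map_right_iff.mpr (hxs.imp fun _ A h => h.trans (flangeWord_sublist_clWord A N)))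
    (forall₂_map_right_iff.mpr hN)

@[simp]
theorem decAt_cons_zero (c : Bool × ℕ∞) (A : List (Bool × ℕ∞)) :
    decAt (c :: A) 0 = (c.1, c.2 - 1) :: A := rfl

@[simp]
theorem decAt_cons_succ (c : Bool × ℕ∞) (A : List (Bool × ℕ∞)) (r : ℕ) :
    decAt (c :: A) (r + 1) = c :: decAt A r := rfl

theorem decAt_append_append (U A V : List (Bool × ℕ∞)) {r : ℕ} (hr : r < A.length) :
    decAt (U ++ A ++ V) (U.length + r) = U ++ decAt A r ++ V := by
  rw [decAt, getD_append_append_length_add U A V hr]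
  simp [decAt, getD_eq_getElem?_getD, hr]

theorem exists_sublist_flangeWord_decAt {x : BW} {A : List (Bool × ℕ∞)}
    (h : x <+ flangeWord A) (hlt : x.length < (flangeWord A).length) :
    ∃ r < A.length, x <+ flangeWord (decAt A r) := by
  induction A generalizing x with
  | nil => simp [flangeWord] at hlt
  | cons c A ih =>
    rw [flangeWord_cons] at h hlt
    obtain ⟨x₁, x₂, rfl, h₁, h₂⟩ := sublist_append_iff.mp h
    obtain ⟨n, hn, rfl⟩ := sublist_replicate_iff.mp h₁
    by_cases hnc : n < c.2.toNat
    · refine ⟨0, by simp, ?_⟩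
      rw [decAt_cons_zero, flangeWord_cons, ENat.toNat_sub (by simp), ENat.toNat_one]
      exact ((replicate_sublist_replicate _).mpr (by omega)).append h₂
    · obtain ⟨r, hr, h'⟩ := ih h₂ (by simp only [length_append, length_replicate] at hlt; omega)
      exact ⟨r + 1, by simpa using hr, by simpa using h₁.append h'⟩

end ClusterWords

section MissesFlange

def MissesFlange (F : List BW) (Ts : List (List (Bool × ℕ∞))) (w : BW) : Prop :=
  ∃ xs ys, Forall₂ (· <+ ·) xs F ∧ xs ≠ F ∧ Forall₂ (· ∈ Zcl ·) ys Ts ∧ w = interleave xs ys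

theorem MissesFlange.cons {F : List BW} {Ts : List (List (Bool × ℕ∞))} {w : BW}
    (h : MissesFlange F Ts w) (f : BW) {l : BW} {T : List (Bool × ℕ∞)} (hl : l ∈ Zcl T) :
    MissesFlange (f :: F) (T :: Ts) (f ++ l ++ w) := by
  obtain ⟨xs, ys, hxs, hne, hys, rfl⟩ := h
  exact ⟨f :: xs, l :: ys, .cons (.refl f) hxs, by simpa using hne, .cons hl hys, rfl⟩

theorem missesFlange_of_length_lt {f₀ f₁ l y : BW} {F ls ys : List BW}
    {T : List (Bool × ℕ∞)} {Ts : List (List (Bool × ℕ∞))} (hf₁ : f₁ ≠ [])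
    (hls : Forall₂ (· ∈ Zcl ·) ls Ts) (hy : y ∈ Zcl T) (hlt : l.length < y.length)
    (h : l ++ interleave (f₁ :: F) ls = y ++ interleave (f₁ :: F) ys) :
    MissesFlange (f₀ :: f₁ :: F) (T :: Ts) (interleave (f₀ :: f₁ :: F) (l :: ls)) := by
  obtain ⟨s, f₁, rfl⟩ := exists_cons_of_ne_nil hf₁
  have hrest : ∀ zs, interleave ((s :: f₁) :: F) zs = s :: interleave (f₁ :: F) zs :=
    interleave_cons_append [s] f₁ F
  rw [hrest, hrest] at h
  have hpre : l ++ [s] <+: y := prefix_of_prefix_length_le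
    (⟨interleave (f₁ :: F) ls, by rw [← h]; simp⟩ : l ++ [s] <+: y ++ s :: interleave (f₁ :: F) ys)
    (prefix_append _ _) (by simpa using hlt)
  refine ⟨f₀ :: f₁ :: F, (l ++ [s]) :: ls, .cons (.refl _) (.cons (sublist_cons_self s f₁)
    (forall₂_same.mpr fun f _ => .refl f)), by simp, .cons (mem_Zcl_of_sublist hpre.sublist hy) hls,
    by simp [interleave, hrest]⟩

theorem eq_or_missesFlange_of_interleave_eq {F : List BW} {Ts : List (List (Bool × ℕ∞))}
    {ls ys : List BW} (hF : F.length = Ts.length + 1)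
    (hint : ∀ j (hj : j < F.length), 0 < j → j < Ts.length → F[j] ≠ [])
    (hls : Forall₂ (· ∈ Zcl ·) ls Ts) (hys : Forall₂ (· ∈ Zcl ·) ys Ts)
    (h : interleave F ls = interleave F ys) :
    ls = ys ∨ MissesFlange F Ts (interleave F ls) := by
  induction hls generalizing F ys with
  | nil => exact .inl (forall₂_nil_right_iff.mp hys).symm
  | @cons l T ls Ts hl hls ih =>
    rcases hys with _ | @⟨y, _, ys, _, hy, hys⟩
    obtain ⟨f₀, F, rfl⟩ := exists_cons_of_length_eq_add_one hF
    obtain ⟨f₁, F, rfl⟩ := exists_cons_of_length_eq_add_one (by simpa using hF)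
    have h' : l ++ interleave (f₁ :: F) ls = y ++ interleave (f₁ :: F) ys := by
      simpa [interleave, append_assoc] using h
    have hf₁ : l.length ≠ y.length → f₁ ≠ [] := by
      intro hne
      cases hls with
      | nil =>
        obtain rfl := forall₂_nil_right_iff.mp hys
        exact absurd (by simpa [interleave] using congrArg length h') hne
      | cons => exact hint 1 (by simp) one_pos (by simp)
    rcases lt_trichotomy l.length y.length with hlt | heq | hlt
    · exact .inr (missesFlange_of_length_lt (hf₁ hlt.ne) hls hy hlt h')
    · obtain ⟨rfl, h''⟩ := append_inj h' heq
      rcases ih (by simpa using hF) (fun j hj h0 hjT => hint (j + 1) (by simpa using hj)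
        (by omega) (by simpa using hjT)) hys h'' with rfl | hmiss
      · exact .inl rfl
      · exact .inr (hmiss.cons f₀ hl)
    · rw [show interleave (f₀ :: f₁ :: F) (l :: ls) = interleave (f₀ :: f₁ :: F) (y :: ys) from h]
      exact .inr (missesFlange_of_length_lt (hf₁ hlt.ne') hys hl hlt h'.symm)

theorem exists_forall₂_modify_decAt {xs : List BW} {As : List (List (Bool × ℕ∞))}
    (h : Forall₂ (fun x A => x <+ flangeWord A) xs As) (hne : xs ≠ As.map flangeWord) :
    ∃ j r, ∃ hj : j < As.length, r < As[j].length ∧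
      Forall₂ (fun x A => x <+ flangeWord A) xs (As.modify j (decAt · r)) := by
  induction h with
  | nil => exact absurd rfl hne
  | @cons x A xs As hx hxs ih =>
    by_cases hxA : x = flangeWord A
    · obtain ⟨j, r, hj, hr, h'⟩ := ih fun h => hne (by simp [hxA, h])
      exact ⟨j + 1, r, by simpa using hj, by simpa using hr, .cons hx h'⟩
    · obtain ⟨r, hr, hx'⟩ := exists_sublist_flangeWord_decAt hx
        (lt_of_le_of_ne hx.length_le (mt hx.eq_of_length hxA))
      exact ⟨0, r, by simp, by simpa using hr, .cons hx' hxs⟩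

end MissesFlange

theorem sum_length_eq_add_one_iff {ι : Type*} [Fintype ι] {x y : ι → BW}
    (h : ∀ i, x i <+ y i) :
    ∑ i, (y i).length = ∑ i, (x i).length + 1 ↔
      ∃ i, CoveredBy (x i) (y i) ∧ ∀ j, j ≠ i → x j = y j := by
  obtain ⟨d, hd⟩ : ∃ d : ι → ℕ, ∀ i, (y i).length = (x i).length + d i :=
    ⟨fun i => (y i).length - (x i).length, fun i => (Nat.add_sub_of_le (h i).length_le).symm⟩
  have hsum : ∑ i, (y i).length = ∑ i, (x i).length + ∑ i, d i := by
    simp only [hd, Finset.sum_add_distrib]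
  have hcov : ∀ i, CoveredBy (x i) (y i) ↔ d i = 1 := fun i =>
    ⟨fun hc => by have := hc.2; rw [hd] at this; omega, fun h1 => ⟨h i, by rw [hd, h1]⟩⟩
  have heq : ∀ j, x j = y j ↔ d j = 0 := fun j =>
    ⟨fun hj => by have := hd j; rw [hj] at this; omega,
      fun h0 => (h j).eq_of_length (by rw [hd, h0, add_zero])⟩
  simp only [hsum, hcov, heq, add_right_inj]
  constructor
  · intro hd
    obtain ⟨i, hi⟩ : ∃ i, d i ≠ 0 := by
      by_contra! h0
      simp [Finset.sum_eq_zero fun i _ => h0 i] at hd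
    have hpair : ∀ j, j ≠ i → d i + d j ≤ 1 := fun j hj => by
      classical
      rw [← hd, ← Finset.sum_pair hj.symm]
      exact Finset.sum_le_sum_of_subset (Finset.subset_univ _)
    have hle := Finset.single_le_sum (fun j _ => Nat.zero_le (d j)) (Finset.mem_univ i)
    exact ⟨i, by omega, fun j hj => by have := hpair j hj; omega⟩
  · rintro ⟨i, hi, hj⟩
    rw [Finset.sum_eq_single i (fun j _ hji => hj j hji) (by simp), hi]

theorem sublist_of_coveredBy_of_eq {ι : Type*} {x y : ι → BW} {i : ι}
    (hi : CoveredBy (x i) (y i)) (hne : ∀ j, j ≠ i → x j = y j) (j : ι) : x j <+ y j := by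
  by_cases hj : j = i
  · exact hj ▸ hi.1
  · exact hne j hj ▸ .refl _

namespace SectionData

variable {t : Template} (D : SectionData t)

def flangeWords : List BW := (ofFn D.A).map flangeWord

def sectionClusters : List (List (Bool × ℕ∞)) := ofFn fun i => (D.T i).clusters

theorem clusters_eq_interleave : t.clusters = interleave (ofFn D.A) D.sectionClusters := by
  rw [sectionClusters, interleave_ofFn]
  exact D.concat

theorem assemble_eq_interleave (ℓ : Fin D.k → BW) :
    assemble D ℓ = interleave D.flangeWords (ofFn ℓ) := by
  rw [flangeWords, map_ofFn, interleave_ofFn]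
  rfl

theorem exists_interleave_modify_eq (j : Fin (D.k + 1)) :
    ∃ U V, ((j : ℕ) = 0 → U = []) ∧ ((j : ℕ) = D.k → V = []) ∧
      ∀ f, interleave ((ofFn D.A).modify j f) D.sectionClusters = U ++ f (D.A j) ++ V := by
  obtain ⟨U, V, hU, hV, hUV⟩ := Zigzag.exists_interleave_modify_eq (xs := ofFn D.A)
    (ys := D.sectionClusters) (by simp only [length_ofFn, sectionClusters]) (j := j)
    (by simp only [length_ofFn]; exact j.isLt)
  refine ⟨U, V, hU, fun h => hV (by simpa only [sectionClusters, length_ofFn] using h), fun f => ?_⟩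
  rw [hUV, List.getElem_ofFn]

theorem flangeWords_getElem_ne_nil (j : ℕ) (hj : j < D.flangeWords.length) (h0 : 0 < j)
    (hjk : j < D.sectionClusters.length) : D.flangeWords[j] ≠ [] := by
  simp only [flangeWords, sectionClusters, length_map, length_ofFn] at hj hjk
  simp only [flangeWords, getElem_map, List.getElem_ofFn]
  obtain ⟨U, V, -, -, hUV⟩ := D.exists_interleave_modify_eq ⟨j, hj⟩
  obtain ⟨c, A, hA⟩ := exists_cons_of_ne_nil (D.interior_ne ⟨j, hj⟩ h0.ne' hjk.ne)
  have hc : c ∈ t.clusters := by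
    rw [D.clusters_eq_interleave, ← modify_id j (ofFn D.A), hUV id, hA]
    simp
  have hc0 : c.2 ≠ 0 := t.pos c hc
  have hctop : c.2 ≠ ⊤ := D.finA _ c (hA ▸ mem_cons_self)
  simp [hA, hc0, hctop]

theorem isFlangePos {j : Fin (D.k + 1)} {U V : List (Bool × ℕ∞)} (hU : (j : ℕ) = 0 → U = [])
    (hV : (j : ℕ) = D.k → V = []) (ht : t.clusters = U ++ D.A j ++ V) {r : ℕ}
    (hr : r < (D.A j).length) : IsFlangePos t (U.length + r) := by
  have hfin : ∀ i (hi : i < (D.A j).length), (D.A j)[i].2 ≠ ⊤ :=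
    fun i hi => D.finA j _ (getElem_mem hi)
  have hget : ∀ i (hi : i < (D.A j).length),
      t.clusters.getD (U.length + i) (true, 1) = (D.A j)[i] :=
    fun i hi => ht ▸ getD_append_append_length_add U _ V hi _
  refine ⟨by rw [ht, length_append, length_append]; omega, hget r hr ▸ hfin r hr, ?_⟩
  rintro ⟨hp0, hlen, hone, hleft, hright⟩
  by_cases hr1 : r + 1 < (D.A j).length
  · exact hfin _ hr1 (hget _ hr1 ▸ hright)
  by_cases hr0 : 0 < r
  · rw [show U.length + r - 1 = U.length + (r - 1) by omega, hget _ (by omega)] at hleft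
    exact hfin _ (by omega) hleft
  obtain rfl : r = 0 := by omega
  obtain ⟨c, hc⟩ := length_eq_one_iff.mp (show (D.A j).length = 1 by omega)
  rw [hget 0 hr, getElem_of_eq hc] at hone
  by_cases h0 : (j : ℕ) = 0
  · simp [hU h0] at hp0
  by_cases hk : (j : ℕ) = D.k
  · rw [ht, hV hk, hc] at hlen
    simp at hlen
  exact D.interior_not_sep j h0 hk c.1 (by rw [hc, ← hone]; rfl)

theorem mem_Jt_of_missesFlange {w : BW} (h : MissesFlange D.flangeWords D.sectionClusters w) :
    w ∈ Jt t := by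
  obtain ⟨xs, ys, hxs, hne, hys, rfl⟩ := h
  rw [flangeWords, forall₂_map_right_iff] at hxs
  obtain ⟨j, r, hj, hr, hxs'⟩ := exists_forall₂_modify_decAt hxs hne
  have hj' : j < D.k + 1 := by simpa using hj
  obtain ⟨U, V, hU, hV, hUV⟩ := D.exists_interleave_modify_eq ⟨j, hj'⟩
  have ht : t.clusters = U ++ D.A ⟨j, hj'⟩ ++ V := by
    have := hUV id
    rwa [modify_id, ← D.clusters_eq_interleave] at this
  rw [List.getElem_ofFn] at hr
  refine ⟨U.length + r, D.isFlangePos hU hV ht hr, ?_⟩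
  rw [ht, decAt_append_append _ _ _ hr, ← hUV (decAt · r)]
  exact interleave_mem_Zcl hxs' hys

theorem forall₂_mem_Zcl_ofFn {ℓ : Fin D.k → BW} (h : ∀ i, ℓ i ∈ Zt (D.T i)) :
    Forall₂ (· ∈ Zcl ·) (ofFn ℓ) D.sectionClusters :=
  forall₂_ofFn_iff.mpr h

theorem assemble_mem_Zt {ℓ : Fin D.k → BW} (h : ∀ i, ℓ i ∈ Zt (D.T i)) : assemble D ℓ ∈ Zt t := by
  rw [Zt, D.clusters_eq_interleave, D.assemble_eq_interleave]
  exact interleave_mem_Zcl (forall₂_map_left_iff.mpr (forall₂_same.mpr fun A _ => .refl _))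
    (D.forall₂_mem_Zcl_ofFn h)

theorem assemble_sublist_assemble {ℓ ℓ' : Fin D.k → BW} (h : ∀ i, ℓ i <+ ℓ' i) :
    assemble D ℓ <+ assemble D ℓ' := by
  rw [D.assemble_eq_interleave, D.assemble_eq_interleave]
  exact interleave_sublist_interleave (forall₂_same.mpr fun f _ => .refl f) (forall₂_ofFn_iff.mpr h)

theorem length_assemble (ℓ : Fin D.k → BW) :
    (assemble D ℓ).length = (assemble D fun _ => []).length + ∑ i, (ℓ i).length := by
  simp only [assemble, length_append, length_flatten, map_ofFn, sum_ofFn, Function.comp_apply,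
    Finset.sum_add_distrib, nil_append]
  ring

theorem sublist_of_assemble_sublist {ℓa ℓb : Fin D.k → BW} (hℓa : ∀ i, ℓa i ∈ Zt (D.T i))
    (hℓb : ∀ i, ℓb i ∈ Zt (D.T i)) (hJ : assemble D ℓa ∉ Jt t)
    (h : assemble D ℓa <+ assemble D ℓb) (i : Fin D.k) : ℓa i <+ ℓb i := by
  simp only [D.assemble_eq_interleave] at h hJ
  obtain ⟨xs, ys, hxs, hys, heq⟩ := exists_of_sublist_interleave (by simp [flangeWords]) h
  have hysZ : Forall₂ (· ∈ Zcl ·) ys D.sectionClusters :=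
    forall₂_trans hys (D.forall₂_mem_Zcl_ofFn hℓb) fun _ _ _ => mem_Zcl_of_sublist
  by_cases hx : xs = D.flangeWords
  · subst hx
    rcases eq_or_missesFlange_of_interleave_eq (by simp [flangeWords, sectionClusters])
      D.flangeWords_getElem_ne_nil
      (D.forall₂_mem_Zcl_ofFn hℓa) hysZ heq with rfl | hmiss
    · exact forall₂_ofFn_iff.mp hys i
    · exact absurd (D.mem_Jt_of_missesFlange hmiss) hJ
  · exact absurd (D.mem_Jt_of_missesFlange ⟨xs, ys, hxs, hx, hysZ, heq⟩) hJ

theorem eq_of_assemble_eq {ℓa ℓb : Fin D.k → BW} (hℓa : ∀ i, ℓa i ∈ Zt (D.T i))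
    (hℓb : ∀ i, ℓb i ∈ Zt (D.T i)) (haJ : assemble D ℓa ∉ Jt t) (hbJ : assemble D ℓb ∉ Jt t)
    (h : assemble D ℓa = assemble D ℓb) : ℓa = ℓb :=
  funext fun i => (D.sublist_of_assemble_sublist hℓa hℓb haJ (h ▸ .refl _) i).antisymm
    (D.sublist_of_assemble_sublist hℓb hℓa hbJ (h ▸ .refl _) i)

theorem coveredBy_assemble_iff {ℓa ℓb : Fin D.k → BW} (hℓa : ∀ i, ℓa i ∈ Zt (D.T i))
    (hℓb : ∀ i, ℓb i ∈ Zt (D.T i)) (haJ : assemble D ℓa ∉ Jt t) :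
    CoveredBy (assemble D ℓa) (assemble D ℓb) ↔ prodAdj D ℓa ℓb := by
  constructor
  · rintro ⟨hsub, hlen⟩
    have h := D.sublist_of_assemble_sublist hℓa hℓb haJ hsub
    refine ⟨hℓa, hℓb, (sum_length_eq_add_one_iff h).mp ?_⟩
    rw [D.length_assemble ℓa, D.length_assemble ℓb] at hlen
    omega
  · rintro ⟨-, -, i, hi, hne⟩
    have h := sublist_of_coveredBy_of_eq hi hne
    refine ⟨D.assemble_sublist_assemble h, ?_⟩
    rw [D.length_assemble ℓa, D.length_assemble ℓb, (sum_length_eq_add_one_iff h).mpr ⟨i, hi, hne⟩]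
    ring

theorem mem_prodV_of_reflTransGen {x y : Fin D.k → BW}
    (hxy : Relation.ReflTransGen (prodAdj D) x y) (hx : x ∈ prodV D) : y ∈ prodV D := by
  rcases hxy.cases_tail with rfl | ⟨_, _, h⟩
  exacts [hx, h.2.1]

theorem assemble_not_mem_Jt_of_reflTransGen {x y : Fin D.k → BW}
    (hxy : Relation.ReflTransGen (prodAdj D) x y) (hx : assemble D x ∉ Jt t) :
    assemble D y ∉ Jt t := by
  induction hxy with
  | refl => exact hx
  | tail _ hadj ih =>
    obtain ⟨-, -, i, hi, hne⟩ := hadj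
    exact fun hJ => ih (mem_Jt_of_sublist
      (D.assemble_sublist_assemble (sublist_of_coveredBy_of_eq hi hne)) hJ)

end SectionData

theorem decomposition_embedding_general (t : Template) (D : SectionData t) :
    -- injectivity and preservation of edges in both directions
    (∀ a b : BW, a ∈ Zt t → a ∉ Jt t → b ∈ Zt t → b ∉ Jt t →
      ∀ ℓa ℓb : Fin D.k → BW, decompOf D a ℓa → decompOf D b ℓb →
        (a = b ↔ ℓa = ℓb) ∧ (CoveredBy a b ↔ prodAdj D ℓa ℓb)) ∧
    -- the image is an ideal of the direct product graph
    (∀ a : BW, a ∈ Zt t → a ∉ Jt t → ∀ ℓa : Fin D.k → BW, decompOf D a ℓa →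
      ∀ y : Fin D.k → BW, Relation.ReflTransGen (prodAdj D) ℓa y →
        ∃ b : BW, b ∈ Zt t ∧ b ∉ Jt t ∧ decompOf D b y) := by
  refine ⟨fun a b _ haJ _ hbJ ℓa ℓb hda hdb => ?_, fun a _ haJ ℓa hda y hy => ?_⟩
  · obtain ⟨hℓa, rfl⟩ := hda
    obtain ⟨hℓb, rfl⟩ := hdb
    exact ⟨⟨D.eq_of_assemble_eq hℓa hℓb haJ hbJ, congrArg _⟩,
      D.coveredBy_assemble_iff hℓa hℓb haJ⟩
  · obtain ⟨hℓa, rfl⟩ := hda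
    have hy' := D.mem_prodV_of_reflTransGen hy hℓa
    exact ⟨assemble D y, D.assemble_mem_Zt hy', D.assemble_not_mem_Jt_of_reflTransGen hy haJ,
      hy', rfl⟩

/-- Lemma 3.10 (2) of the paper.  The map
`λ ↦ (λ^{(1)}, …, λ^{(k)})` given by the unique decomposition along the sections is
an embedding of graded graphs `Z(t) ∖ J(t) → Z(t₁) × ⋯ × Z(t_k)` whose image is an
ideal of the direct product graph. -/
theorem decomposition_embedding (t : Template) (hsf : ¬t.IsFiniteTemplate)
    (D : SectionData t) :
    -- injectivity and preservation of edges in both directions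
    (∀ a b : BW, a ∈ Zt t → a ∉ Jt t → b ∈ Zt t → b ∉ Jt t →
      ∀ ℓa ℓb : Fin D.k → BW, decompOf D a ℓa → decompOf D b ℓb →
        (a = b ↔ ℓa = ℓb) ∧ (CoveredBy a b ↔ prodAdj D ℓa ℓb)) ∧
    -- the image is an ideal of the direct product graph
    (∀ a : BW, a ∈ Zt t → a ∉ Jt t → ∀ ℓa : Fin D.k → BW, decompOf D a ℓa →
      ∀ y : Fin D.k → BW, Relation.ReflTransGen (prodAdj D) ℓa y →
        ∃ b : BW, b ∈ Zt t ∧ b ∉ Jt t ∧ decompOf D b y) :=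
  decomposition_embedding_general t D

end Zigzag
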